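/- arXiv:1911.10465 — 2 statements merged into one kernel-verified Lean document; each statement's English description precedes it below -/
import Mathlib

section
/- Let k ≥ 1, η > 0, and let f be a C^k function on an interval I with |f^{(k)}| > η on I. Then there is a constant C depending only on k such that the Lebesgue measure of {x ∈ I : |f(x)| ≤ λ} is at most C (λ/η)^{1/k} for every λ > 0. -/
/-!
Induction on `k`, after replacing `f` by `-f` so that `f^{(k)} > η` (its sign is constant by
continuity). Then `g = f^{(k-1)}` satisfies that `g x - η x` is monotone, so `{|g| ≤ δ}` has
diameter at most `2δ/η`. The rest of the interval consists of at most two closed subintervals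
on which `|g| ≥ δ`, and there the induction hypothesis bounds the sublevel set of `f` by
`C (2λ/δ)^{1/(k-1)}`. The choice `δ = 2η (λ/η)^{1/k}` makes both bounds `O((λ/η)^{1/k})`.
-/

open MeasureTheory Set

def SublevelBound (k : ℕ) (C : ℝ) : Prop :=
  ∀ (x₀ x₁ : ℝ) (f : ℝ → ℝ) (η : ℝ), x₀ ≤ x₁ → 0 < η →
    ContDiffOn ℝ k f (Icc x₀ x₁) →
    (∀ x ∈ Icc x₀ x₁, η < |iteratedDerivWithin k f (Icc x₀ x₁) x|) →
    ∀ l : ℝ, 0 < l →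
      volume {x ∈ Icc x₀ x₁ | |f x| ≤ l} ≤ ENNReal.ofReal (C * (l / η) ^ (1 / (k : ℝ)))

lemma volume_sublevel_le_of_monotoneOn_sub {s : Set ℝ} {g : ℝ → ℝ} {η : ℝ} (hη : 0 < η)
    (hg : MonotoneOn (fun x => g x - η * x) s) (δ : ℝ) :
    volume {x ∈ s | |g x| ≤ δ} ≤ ENNReal.ofReal (2 * δ / η) := by
  have hdist : ∀ y ∈ s, ∀ z ∈ s, y ≤ z → |g y| ≤ δ → |g z| ≤ δ → z - y ≤ 2 * δ / η := by
    intro y hy z hz hyz hgy hgz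
    have hmono := hg hy hz hyz
    rw [le_div_iff₀ hη]
    linarith [abs_le.1 hgy, abs_le.1 hgz]
  refine (Real.volume_le_diam _).trans (Metric.ediam_le fun y hy z hz => ?_)
  rw [edist_dist, Real.dist_eq]
  refine ENNReal.ofReal_le_ofReal ?_
  rcases le_total y z with hyz | hzy
  · rw [abs_sub_comm, abs_of_nonneg (sub_nonneg.2 hyz)]
    exact hdist y hy.1 z hz.1 hyz hy.2 hz.2
  · rw [abs_of_nonneg (sub_nonneg.2 hzy)]
    exact hdist z hz.1 y hy.1 hzy hz.2 hy.2

lemma IsPreconnected.forall_lt_or_forall_lt_neg_of_lt_abs {α : Type*} [TopologicalSpace α]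
    {s : Set α} (hs : IsPreconnected s) {h : α → ℝ} (hc : ContinuousOn h s) {η : ℝ} (hη : 0 ≤ η)
    (habs : ∀ x ∈ s, η < |h x|) : (∀ x ∈ s, η < h x) ∨ (∀ x ∈ s, η < -h x) := by
  have hne : ∀ {x}, x ∈ s → |h x| ≠ 0 := fun hx => (hη.trans_lt (habs _ hx)).ne'
  rcases hs.eq_or_eq_neg_of_sq_eq hc hc.abs (fun x _ => (sq_abs (h x)).symm) hne with hp | hn
  · exact Or.inl fun x hx => (hp hx).symm ▸ habs x hx
  · refine Or.inr fun x hx => ?_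
    rw [hn hx, Pi.neg_apply, neg_neg]
    exact habs x hx

lemma monotoneOn_iteratedDerivWithin_sub {f : ℝ → ℝ} {k : ℕ} {a b η : ℝ} (hab : a < b)
    (hf : ContDiffOn ℝ (k + 1 : ℕ) f (Icc a b))
    (hη : ∀ x ∈ Icc a b, η ≤ iteratedDerivWithin (k + 1) f (Icc a b) x) :
    MonotoneOn (fun x => iteratedDerivWithin k f (Icc a b) x - η * x) (Icc a b) := by
  have hdiff := hf.differentiableOn_iteratedDerivWithin (m := k) (by norm_cast; omega)
    (uniqueDiffOn_Icc hab)
  refine monotoneOn_of_hasDerivWithinAt_nonneg (convex_Icc a b)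
    ((hdiff.continuousOn).sub (continuousOn_const.mul continuousOn_id))
    (fun x hx => (((hdiff x (interior_subset hx)).hasDerivWithinAt).sub
      ((hasDerivWithinAt_id x _).const_mul η)).mono interior_subset) (fun x hx => ?_)
  rw [mul_one, sub_nonneg, ← iteratedDerivWithin_succ]
  exact hη x (interior_subset hx)

lemma iteratedDerivWithin_eq_of_subset {𝕜 F : Type*} [NontriviallyNormedField 𝕜]
    [NormedAddCommGroup F] [NormedSpace 𝕜 F] {f : 𝕜 → F} {k : ℕ} {s t : Set 𝕜} (hst : s ⊆ t)
    (hs : UniqueDiffOn 𝕜 s) (ht : UniqueDiffOn 𝕜 t) (hf : ContDiffOn 𝕜 k f t) {x : 𝕜}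
    (hx : x ∈ s) : iteratedDerivWithin k f s x = iteratedDerivWithin k f t x := by
  simp only [iteratedDerivWithin_eq_iteratedFDerivWithin,
    iteratedFDerivWithin_subset hst hs ht hf hx]

lemma div_rpow_one_div_natCast_succ {t : ℝ} (ht : 0 < t) {k : ℕ} (hk : k ≠ 0) :
    (t / t ^ (1 / ((k + 1 : ℕ) : ℝ))) ^ (1 / (k : ℝ)) = t ^ (1 / ((k + 1 : ℕ) : ℝ)) := by
  obtain ⟨s, hs, rfl⟩ : ∃ s : ℝ, 0 < s ∧ s ^ (k + 1) = t :=
    ⟨_, by positivity, Real.rpow_inv_natCast_pow ht.le (Nat.succ_ne_zero k)⟩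
  rw [one_div, one_div, Real.pow_rpow_inv_natCast hs.le (Nat.succ_ne_zero k), pow_succ,
    mul_div_cancel_right₀ _ hs.ne', Real.pow_rpow_inv_natCast hs.le hk]

lemma MonotoneOn.ordConnected_sep_le {α β : Type*} [Preorder α] [Preorder β] {s : Set α}
    (hs : s.OrdConnected) {g : α → β} (hg : MonotoneOn g s) (c : β) :
    {x ∈ s | g x ≤ c}.OrdConnected :=
  ⟨fun _ hy _ hz _ hw => ⟨hs.out hy.1 hz.1 hw, (hg (hs.out hy.1 hz.1 hw) hz.1 hw.2).trans hz.2⟩⟩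

lemma MonotoneOn.ordConnected_sep_ge {α β : Type*} [Preorder α] [Preorder β] {s : Set α}
    (hs : s.OrdConnected) {g : α → β} (hg : MonotoneOn g s) (c : β) :
    {x ∈ s | c ≤ g x}.OrdConnected :=
  ⟨fun _ hy _ hz _ hw => ⟨hs.out hy.1 hz.1 hw, hy.2.trans (hg hy.1 (hs.out hy.1 hz.1 hw) hw.1)⟩⟩

lemma sep_subset_sep_abs_le_union {α : Type*} (I : Set α) (p : α → Prop) (g : α → ℝ) (c : ℝ) :
    {x ∈ I | p x} ⊆ {x ∈ I | |g x| ≤ c} ∪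
      ({x ∈ {x ∈ I | g x ≤ -c} | p x} ∪ {x ∈ {x ∈ I | c ≤ g x} | p x}) := by
  rintro y ⟨hy, hpy⟩
  rcases le_or_gt (|g y|) c with hg | hg
  · exact Or.inl ⟨hy, hg⟩
  rcases lt_abs.1 hg with hg | hg
  · exact Or.inr (Or.inr ⟨⟨hy, hg.le⟩, hpy⟩)
  · exact Or.inr (Or.inl ⟨⟨hy, le_neg_of_le_neg hg.le⟩, hpy⟩)

namespace SublevelBound

variable {k : ℕ} {C : ℝ}

theorem of_ordConnected (hC : SublevelBound k C) {x₀ x₁ : ℝ} (hx : x₀ < x₁) {f : ℝ → ℝ}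
    {η : ℝ} (hη : 0 < η) (hf : ContDiffOn ℝ k f (Icc x₀ x₁)) {S : Set ℝ}
    (hSI : S ⊆ Icc x₀ x₁) (hS : IsClosed S) (hSo : S.OrdConnected)
    (habs : ∀ x ∈ S, η < |iteratedDerivWithin k f (Icc x₀ x₁) x|) {l : ℝ} (hl : 0 < l) :
    volume {x ∈ S | |f x| ≤ l} ≤ ENNReal.ofReal (C * (l / η) ^ (1 / (k : ℝ))) := by
  rcases S.eq_empty_or_nonempty with rfl | hne
  · simp
  have hSeq : S = Icc (sInf S) (sSup S) := eq_Icc_of_connected_compact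
    ⟨hne, hSo.isPreconnected⟩ (isCompact_Icc.of_isClosed_subset hS hSI)
  set a := sInf S
  set b := sSup S
  rw [hSeq] at hSI habs ⊢
  rcases (nonempty_Icc.1 (hSeq ▸ hne)).eq_or_lt with hab | hab
  · refine (measure_mono (sep_subset _ _)).trans ?_
    simp [hab]
  have hderiv : ∀ x ∈ Icc a b,
      iteratedDerivWithin k f (Icc a b) x = iteratedDerivWithin k f (Icc x₀ x₁) x :=
    fun x => iteratedDerivWithin_eq_of_subset hSI (uniqueDiffOn_Icc hab) (uniqueDiffOn_Icc hx) hf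
  exact hC a b f η hab.le hη (hf.mono hSI) (fun x hx => hderiv x hx ▸ habs x hx) l hl

theorem succ_of_monotoneOn
    (hmono : ∀ (x₀ x₁ : ℝ) (f : ℝ → ℝ) (η : ℝ), x₀ < x₁ → 0 < η →
      ContDiffOn ℝ (k + 1 : ℕ) f (Icc x₀ x₁) →
      MonotoneOn (fun x => iteratedDerivWithin k f (Icc x₀ x₁) x - η * x) (Icc x₀ x₁) →
      ∀ l : ℝ, 0 < l → volume {x ∈ Icc x₀ x₁ | |f x| ≤ l} ≤
        ENNReal.ofReal (C * (l / η) ^ (1 / ((k + 1 : ℕ) : ℝ)))) :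
    SublevelBound (k + 1) C := by
  intro x₀ x₁ f η hx hη hf habs l hl
  rcases hx.eq_or_lt with rfl | hx
  · refine (measure_mono (sep_subset _ _)).trans ?_
    simp
  rcases isPreconnected_Icc.forall_lt_or_forall_lt_neg_of_lt_abs
    (hf.continuousOn_iteratedDerivWithin le_rfl (uniqueDiffOn_Icc hx)) hη.le habs
    with hpos | hneg
  · exact hmono x₀ x₁ f η hx hη hf
      (monotoneOn_iteratedDerivWithin_sub hx hf fun x hx => (hpos x hx).le) l hl
  · have hneg' : ∀ x ∈ Icc x₀ x₁, η ≤ iteratedDerivWithin (k + 1) (-f) (Icc x₀ x₁) x :=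
      fun x hx => by simpa only [iteratedDerivWithin_neg] using (hneg x hx).le
    simpa using hmono x₀ x₁ (-f) η hx hη hf.neg
      (monotoneOn_iteratedDerivWithin_sub hx hf.neg hneg') l hl

theorem succ (hC : SublevelBound k C) (hC0 : 0 ≤ C) (hk : k ≠ 0) :
    SublevelBound (k + 1) (2 * C + 4) := by
  refine succ_of_monotoneOn fun x₀ x₁ f η hx hη hf hmono l hl => ?_
  set I := Icc x₀ x₁
  set g := iteratedDerivWithin k f I
  set s := (l / η) ^ (1 / ((k + 1 : ℕ) : ℝ))
  have hs : 0 < s := by positivity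
  have hgc : ContinuousOn g I :=
    hf.continuousOn_iteratedDerivWithin (by norm_cast; omega) (uniqueDiffOn_Icc hx)
  have hgmono : MonotoneOn g I := by
    simpa using hmono.add ((monotone_id.const_mul hη.le).monotoneOn I)
  have hfk : ContDiffOn ℝ k f I := hf.of_le (by norm_cast; omega)
  have hout : ∀ S ⊆ {x ∈ I | 2 * η * s ≤ |g x|}, IsClosed S → S.OrdConnected →
      volume {x ∈ S | |f x| ≤ l} ≤ ENNReal.ofReal (C * s) := by
    intro S hS hSc hSo
    have hbound := hC.of_ordConnected (η := η * s) hx (by positivity) hfk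
      (fun x hx => (hS hx).1) hSc hSo (fun x hx => by linarith [(hS hx).2, mul_pos hη hs]) hl
    rwa [← div_div, div_rpow_one_div_natCast_succ (by positivity) hk] at hbound
  have hneg := hout {x ∈ I | g x ≤ -(2 * η * s)}
    (fun x hx => ⟨hx.1, le_abs.2 (Or.inr (le_neg_of_le_neg hx.2))⟩)
    (hgc.preimage_isClosed_of_isClosed isClosed_Icc isClosed_Iic)
    (hgmono.ordConnected_sep_le ordConnected_Icc _)
  have hpos := hout {x ∈ I | 2 * η * s ≤ g x}
    (fun x hx => ⟨hx.1, le_abs.2 (Or.inl hx.2)⟩)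
    (hgc.preimage_isClosed_of_isClosed isClosed_Icc isClosed_Ici)
    (hgmono.ordConnected_sep_ge ordConnected_Icc _)
  have hmid : volume {x ∈ I | |g x| ≤ 2 * η * s} ≤ ENNReal.ofReal (4 * s) := by
    convert volume_sublevel_le_of_monotoneOn_sub hη hmono (2 * η * s) using 2
    field_simp
    norm_num
  calc volume {x ∈ I | |f x| ≤ l}
      ≤ volume {x ∈ I | |g x| ≤ 2 * η * s} +
          (volume {x ∈ {x ∈ I | g x ≤ -(2 * η * s)} | |f x| ≤ l} +
            volume {x ∈ {x ∈ I | 2 * η * s ≤ g x} | |f x| ≤ l}) :=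
        (measure_mono (sep_subset_sep_abs_le_union I _ g _)).trans
          ((measure_union_le _ _).trans (add_le_add le_rfl (measure_union_le _ _)))
    _ ≤ ENNReal.ofReal (4 * s) + (ENNReal.ofReal (C * s) + ENNReal.ofReal (C * s)) := by
        gcongr
    _ = ENNReal.ofReal ((2 * C + 4) * s) := by
        rw [← ENNReal.ofReal_add (by positivity) (by positivity),
          ← ENNReal.ofReal_add (by positivity) (by positivity)]
        ring_nf

end SublevelBound

theorem sublevelBound_one : SublevelBound 1 2 :=
  SublevelBound.succ_of_monotoneOn fun _ _ _ _ _ hη _ hmono l _ => by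
    simpa [mul_div_assoc] using volume_sublevel_le_of_monotoneOn_sub hη hmono l

/-- Sublevel-set estimate.  For every `k ≥ 1` there is a constant
`C > 0` depending only on `k` such that for every interval `[x₀,x₁]`, every
`η > 0` and every `C^k` function `f` on `[x₀,x₁]` with `|f^{(k)}| > η` there,
the measure of `{x ∈ [x₀,x₁] : |f x| ≤ λ}` is at most `C (λ/η)^{1/k}` for all
`λ > 0`. -/
theorem stmt_8 (k : ℕ) (hk : 1 ≤ k) :
    ∃ C : ℝ, 0 < C ∧
      ∀ (x₀ x₁ : ℝ) (f : ℝ → ℝ) (η : ℝ), x₀ ≤ x₁ → 0 < η →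
        ContDiffOn ℝ k f (Icc x₀ x₁) →
        (∀ x ∈ Icc x₀ x₁, η < |iteratedDerivWithin k f (Icc x₀ x₁) x|) →
        ∀ l : ℝ, 0 < l →
          volume {x ∈ Icc x₀ x₁ | |f x| ≤ l} ≤
            ENNReal.ofReal (C * (l / η) ^ (1 / (k:ℝ))) := by
  induction k, hk using Nat.le_induction with
  | base => exact ⟨2, two_pos, sublevelBound_one⟩
  | succ k hk ih =>
    obtain ⟨C, hC0, hC⟩ := ih
    exact ⟨2 * C + 4, by positivity, SublevelBound.succ hC hC0.le (by omega)⟩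
end

section
/- Let a ≥ 1, m ≥ 1 be integers and let φ_1, …, φ_a be complex-valued continuous functions near 0 ∈ ℝ with φ_j(y) = O(y^N) for every N, and suppose max_j |φ_j(y)| ≤ (1/2) y^m for y ∈ [0, r]. Let ṽ be continuous near the origin in ℝ² with ṽ(0,0) > 0, and set f̃(x,y) = ṽ(x,y) ∏_{j=1}^a (1 − φ_j(y)/x). Then, after possibly shrinking r and the neighborhood, f̃(x,y) ≥ ṽ(0,0)/2^{a+1} > 0 for all (x,y) with x > y^m and 0 ≤ y ≤ r. -/
/-! On `x > y^m` the bound `|φ_j(y)| ≤ y^m/2 < x/2` makes every factor `1 - φ_j(y)/x` at least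
`1/2`, and continuity of `ṽ` gives `ṽ ≥ ṽ(0,0)/2` on a small enough box around the origin. -/

open Set

lemma half_le_one_sub_div {c x : ℝ} (hx : 0 < x) (hc : |c| ≤ x / 2) : 1 / 2 ≤ 1 - c / x := by
  have : c / x ≤ 1 / 2 := by
    rw [div_le_iff₀ hx]
    linarith [le_abs_self c]
  linarith

lemma half_pow_card_le_prod_one_sub_div {ι : Type*} (s : Finset ι) (c : ι → ℝ) {x : ℝ}
    (hx : 0 < x) (hc : ∀ j ∈ s, |c j| ≤ x / 2) :
    (1 / 2 : ℝ) ^ s.card ≤ ∏ j ∈ s, (1 - c j / x) := by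
  rw [← Finset.prod_const]
  exact Finset.prod_le_prod (fun _ _ => by norm_num)
    fun j hj => half_le_one_sub_div hx (hc j hj)

theorem stmt_18_general (a m : ℕ) (r : ℝ) (hr : 0 < r)
    (φ : ℕ → ℝ → ℝ)
    (hφb : ∀ j < a, ∀ y ∈ Icc (0:ℝ) r, |φ j y| ≤ (1/2) * y ^ m)
    (vt : ℝ × ℝ → ℝ) (hvt : Continuous vt) (hv0 : 0 < vt (0, 0)) :
    ∃ r' : ℝ, 0 < r' ∧ r' ≤ r ∧
      ∀ p : ℝ × ℝ, p.2 ^ m < p.1 → p.1 ≤ r' → 0 ≤ p.2 → p.2 ≤ r' →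
        vt (0, 0) / 2 ^ (a + 1) ≤
          vt p * ∏ j ∈ Finset.range a, (1 - φ j p.2 / p.1) := by
  obtain ⟨δ, hδ, hvδ⟩ := Metric.eventually_nhds_iff.mp
    (hvt.continuousAt.eventually (lt_mem_nhds (half_lt_self hv0)))
  refine ⟨min r (δ / 2), lt_min hr (half_pos hδ), min_le_left _ _, ?_⟩
  intro p hx hxr hy hyr
  have hr'δ : min r (δ / 2) < δ := (min_le_right _ _).trans_lt (half_lt_self hδ)
  have hx0 : 0 < p.1 := (pow_nonneg hy m).trans_lt hx
  have hvp : vt (0, 0) / 2 < vt p := hvδ <| by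
    rw [Prod.dist_eq, Real.dist_0_eq_abs, Real.dist_0_eq_abs, abs_of_pos hx0, abs_of_nonneg hy]
    exact max_lt (by linarith) (by linarith)
  have hprod : (1 / 2 : ℝ) ^ a ≤ ∏ j ∈ Finset.range a, (1 - φ j p.2 / p.1) := by
    simpa using half_pow_card_le_prod_one_sub_div (Finset.range a) (fun j => φ j p.2) hx0
      fun j hj => (hφb j (Finset.mem_range.mp hj) p.2 ⟨hy, hyr.trans (min_le_left _ _)⟩).trans
        (by linarith)
  calc vt (0, 0) / 2 ^ (a + 1) = vt (0, 0) / 2 * (1 / 2) ^ a := by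
        rw [pow_succ, one_div_pow]; field_simp
    _ ≤ vt p * ∏ j ∈ Finset.range a, (1 - φ j p.2 / p.1) :=
      mul_le_mul hvp.le hprod (by positivity) (by linarith)

/-- Lemma 5.2(i): with `f̃(x,y) = ṽ(x,y) ∏_{j=1}^a (1 − φ_j(y)/x)`,
where `ṽ` is continuous with `ṽ(0,0) > 0` and each `φ_j` is continuous,
`φ_j(y) = O(y^N)` for every `N`, and `|φ_j(y)| ≤ (1/2) y^m` on `[0,r]`, after
shrinking `r` and the neighborhood one has the uniform lower bound
`f̃ ≥ ṽ(0,0)/2^{a+1}` on the region `{x > y^m, 0 ≤ y ≤ r}`. -/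
theorem stmt_18 (a m : ℕ) (ha : 1 ≤ a) (hm : 1 ≤ m) (r : ℝ) (hr : 0 < r)
    (φ : ℕ → ℝ → ℝ) (hφc : ∀ j, Continuous (φ j))
    (hφO : ∀ j, ∀ N : ℕ, (fun y => φ j y) =O[nhds (0:ℝ)] fun y => y ^ N)
    (hφb : ∀ j < a, ∀ y ∈ Icc (0:ℝ) r, |φ j y| ≤ (1/2) * y ^ m)
    (vt : ℝ × ℝ → ℝ) (hvt : Continuous vt) (hv0 : 0 < vt (0, 0)) :
    ∃ r' : ℝ, 0 < r' ∧ r' ≤ r ∧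
      ∀ p : ℝ × ℝ, p.2 ^ m < p.1 → p.1 ≤ r' → 0 ≤ p.2 → p.2 ≤ r' →
        vt (0, 0) / 2 ^ (a + 1) ≤
          vt p * ∏ j ∈ Finset.range a, (1 - φ j p.2 / p.1) :=
  stmt_18_general a m r hr φ hφb vt hvt hv0
end
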